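/- arXiv:1610.05592 — 2 statements merged into one kernel-verified Lean document; each statement's English description precedes it below -/
import Mathlib

section
/- On M = ℝ³ with ω = dx∧dy∧dz and H = −x dy, the Hamiltonian vector field is v_H = ∂/∂z, and for α = z dx, β = z dy one has L_{v_H}α = dx and L_{v_H}β = dy (both exact), but L_{v_H}(α∧β) = 2z dx∧dy is not closed. Hence globally conserved quantities are not closed under wedge product. -/
/-! Along the constant field `v_H = ∂_z`, Cartan's formula reduces the Lie derivative to
differentiation in `z`. Hence `L(z dx) = dx` and `L(z dy) = dy` are exact, while
`α ∧ β = z² dx∧dy` gives `L(α ∧ β) = 2z dx∧dy`, whose differential `2 dz∧dx∧dy = 2ω`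
does not vanish. -/

noncomputable section

/-- Points/vectors of ℝ³. -/
abbrev E3 := Fin 3 → ℝ

/-- Exterior derivative of a 0-form on ℝ³. -/
def d0 (f : E3 → ℝ) : E3 → E3 → ℝ :=
  fun x u => fderiv ℝ f x u

/-- Exterior derivative of a 1-form on ℝ³. -/
def d1 (α : E3 → E3 → ℝ) : E3 → E3 → E3 → ℝ :=
  fun x u v => fderiv ℝ (fun y => α y v) x u - fderiv ℝ (fun y => α y u) x v

/-- Exterior derivative of a 2-form on ℝ³. -/
def d2 (β : E3 → E3 → E3 → ℝ) : E3 → E3 → E3 → E3 → ℝ :=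
  fun x u v w =>
    fderiv ℝ (fun y => β y v w) x u - fderiv ℝ (fun y => β y u w) x v
      + fderiv ℝ (fun y => β y u v) x w

/-- Lie derivative of a 1-form along a constant vector field `c` (Cartan's formula). -/
def L1 (c : E3) (α : E3 → E3 → ℝ) : E3 → E3 → ℝ :=
  fun x u => d0 (fun y => α y c) x u + d1 α x c u

/-- Lie derivative of a 2-form along a constant vector field `c` (Cartan's formula). -/
def L2 (c : E3) (β : E3 → E3 → E3 → ℝ) : E3 → E3 → E3 → ℝ :=
  fun x u v => d1 (fun y u' => β y c u') x u v + d2 β x c u v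

/-- The standard volume form `ω = dx ∧ dy ∧ dz` on ℝ³. -/
def ω3 : E3 → E3 → E3 → E3 → ℝ :=
  fun _ u v w =>
    u 0 * (v 1 * w 2 - v 2 * w 1) - u 1 * (v 0 * w 2 - v 2 * w 0)
      + u 2 * (v 0 * w 1 - v 1 * w 0)

/-- The 1-form `H = −x dy`. -/
def H9 : E3 → E3 → ℝ := fun x u => -(x 0 * u 1)

/-- The Hamiltonian vector field `v_H = ∂/∂z` of `H = −x dy`. -/
def vH9 : E3 := ![0, 0, 1]

/-- The 1-form `α = z dx`. -/
def α9 : E3 → E3 → ℝ := fun x u => x 2 * u 0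

/-- The 1-form `β = z dy`. -/
def β9 : E3 → E3 → ℝ := fun x u => x 2 * u 1

/-- The wedge product `α ∧ β` of the two 1-forms, a 2-form. -/
def αβ9 : E3 → E3 → E3 → ℝ := fun x u v => α9 x u * β9 x v - α9 x v * β9 x u

section CoordinateDerivatives

variable {ι : Type*} [Fintype ι] (i : ι) (c : ℝ) (x u : ι → ℝ)

lemma fderiv_apply_mul_const : fderiv ℝ (fun y : ι → ℝ => y i * c) x u = u i * c := by
  rw [((hasFDerivAt_apply i x).mul_const c).fderiv]
  simp [mul_comm]

lemma fderiv_apply_mul_self_mul_const :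
    fderiv ℝ (fun y : ι → ℝ => y i * y i * c) x u = 2 * x i * u i * c := by
  have hi : HasFDerivAt (fun y : ι → ℝ => y i) (ContinuousLinearMap.proj (R := ℝ) i) x :=
    hasFDerivAt_apply i x
  rw [((hi.fun_mul hi).mul_const c).fderiv]
  simp only [smul_add, add_apply, smul_apply, ContinuousLinearMap.proj_apply, smul_eq_mul]
  ring

end CoordinateDerivatives

lemma d0_eval (i : Fin 3) : d0 (fun y => y i) = fun _ u => u i := by
  funext x u
  simp [d0, (hasFDerivAt_apply i x).fderiv]

lemma L1_apply_mul_apply (c : E3) (k j : Fin 3) :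
    L1 c (fun y u => y k * u j) = fun _ u => c k * u j := by
  funext x u
  simp only [L1, d0, d1, fderiv_apply_mul_const]
  ring

lemma d1_H9 (x u v : E3) : d1 H9 x u v = -(ω3 x vH9 u v) := by
  have hH : ∀ w : E3, (fun y : E3 => H9 y w) = fun y => y 0 * -w 1 := fun w => by
    funext y; simp [H9]
  simp only [d1, hH, fderiv_apply_mul_const, ω3, vH9, Matrix.cons_val_zero, Matrix.cons_val_one,
    Matrix.cons_val_two, Matrix.tail_cons, Matrix.head_cons]
  ring

lemma L1_vH9_α9 : L1 vH9 α9 = fun _ u => u 0 :=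
  (L1_apply_mul_apply vH9 2 0).trans (by simp [vH9])

lemma L1_vH9_β9 : L1 vH9 β9 = fun _ u => u 1 :=
  (L1_apply_mul_apply vH9 2 1).trans (by simp [vH9])

lemma L2_vH9_αβ9 : L2 vH9 αβ9 = fun x u v => 2 * x 2 * (u 0 * v 1 - u 1 * v 0) := by
  have hαβ : ∀ a b : E3, (fun y : E3 => αβ9 y a b) = fun y => y 2 * y 2 * (a 0 * b 1 - b 0 * a 1) :=
    fun a b => by funext y; simp only [αβ9, α9, β9]; ring
  funext x u v
  simp only [L2, d1, d2, hαβ, fderiv_apply_mul_self_mul_const]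
  simp only [vH9, Matrix.cons_val_zero, Matrix.cons_val_one, Matrix.cons_val_two,
    Matrix.tail_cons, Matrix.head_cons]
  ring

lemma d2_L2_vH9_αβ9 : d2 (L2 vH9 αβ9) = (2 : ℝ) • ω3 := by
  have h : ∀ a b : E3, (fun y : E3 => 2 * y 2 * (a 0 * b 1 - a 1 * b 0))
      = fun y => y 2 * (2 * (a 0 * b 1 - a 1 * b 0)) :=
    fun a b => by funext y; ring
  funext x u v w
  simp only [L2_vH9_αβ9, d2, h, fderiv_apply_mul_const, ω3, Pi.smul_apply, smul_eq_mul]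
  ring

lemma ω3_ne_zero : ω3 ≠ 0 := by
  intro h
  have h1 : ω3 0 ![1, 0, 0] ![0, 1, 0] ![0, 0, 1] = 1 := by simp [ω3]
  simp [h] at h1

/-- On ℝ³ with `ω = dx∧dy∧dz` and `H = −x dy`, the Hamiltonian vector
field is `v_H = ∂/∂z` (i.e. `dH = −ι_{v_H}ω`); for `α = z dx`, `β = z dy` one has
`L_{v_H}α = dx` and `L_{v_H}β = dy`, which are exact, but
`L_{v_H}(α∧β) = 2z dx∧dy` is not closed.  Hence globally conserved quantities are not
closed under the wedge product. -/
theorem r3_wedge_of_globally_conserved_not_conserved :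
    (∀ x u v : E3, d1 H9 x u v = -(ω3 x vH9 u v)) ∧
    (L1 vH9 α9 = fun _ u => u 0) ∧
    (L1 vH9 β9 = fun _ u => u 1) ∧
    (∃ f : E3 → ℝ, L1 vH9 α9 = d0 f) ∧
    (∃ g : E3 → ℝ, L1 vH9 β9 = d0 g) ∧
    (L2 vH9 αβ9 = fun x u v => 2 * x 2 * (u 0 * v 1 - u 1 * v 0)) ∧
    d2 (L2 vH9 αβ9) ≠ 0 := by
  refine ⟨d1_H9, L1_vH9_α9, L1_vH9_β9, ⟨fun y => y 0, ?_⟩, ⟨fun y => y 1, ?_⟩, L2_vH9_αβ9, ?_⟩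
  · rw [L1_vH9_α9, d0_eval]
  · rw [L1_vH9_β9, d0_eval]
  · rw [d2_L2_vH9_αβ9]
    exact smul_ne_zero two_ne_zero ω3_ne_zero

end
end

section
/- Let M be a manifold, v a complete vector field with flow φ_t, Σ a compact oriented closed d-manifold, and α ∈ Ω^d(M) with L_v α closed. Then for any smooth σ_0: Σ → M and σ_t := φ_t ∘ σ_0, one has ∫_Σ σ_t^*α − ∫_Σ σ_0^*α = t · ∫_Σ σ_0^*(L_v α); in particular this quantity depends only on t and the homotopy class of σ_0, linearly in t. -/
/-!
Cartan's formula turns `L_v β` into the exact form `d (ι_v β)` whenever `β` is closed, and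
pullbacks of exact forms integrate to zero over the closed manifold `Σ`. Applied to
`β = L_v α`, this makes `t ↦ ∫_Σ σ_t^*(L_v α)` have zero derivative, hence constant; so
`t ↦ ∫_Σ σ_t^*α` has constant derivative and is affine in `t`.
-/

lemma sub_eq_mul_of_hasDerivAt_const {f : ℝ → ℝ} {c : ℝ} (hf : ∀ t, HasDerivAt f c t)
    (t : ℝ) : f t - f 0 = t * c := by
  have hzero : ∀ s, HasDerivAt (fun r => f r - r * c) 0 s := fun s => by
    simpa only [one_mul, sub_self] using (hf s).fun_sub ((hasDerivAt_id' s).mul_const c)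
  have := is_const_of_deriv_eq_zero (fun s => (hzero s).differentiableAt)
    (fun s => (hzero s).deriv) t 0
  simp only [zero_mul, sub_zero] at this
  linarith

lemma integral_map_lie_eq_zero_of_closed {F Fsig : Type*} [AddCommGroup F] [Module ℝ F]
    [AddCommGroup Fsig] [Module ℝ Fsig] {d ic L : F →ₗ[ℝ] F}
    (hCartan : ∀ β, L β = d (ic β) + ic (d β)) {dsig : Fsig →ₗ[ℝ] Fsig} {P : F →ₗ[ℝ] Fsig}
    {I : Fsig →ₗ[ℝ] ℝ} (hPd : ∀ β, P (d β) = dsig (P β)) (hStokes : ∀ γ, I (dsig γ) = 0)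
    {β : F} (hβ : d β = 0) : I (P (L β)) = 0 := by
  rw [hCartan, hβ, map_zero, add_zero, hPd, hStokes]

/-- Let `Σ` be a compact oriented closed `d`-manifold, `v` a complete
vector field on `M` with flow `φ_t`, `σ₀ : Σ → M` smooth and `σ_t := φ_t ∘ σ₀`.  In the
abstract encoding: `F` are forms on `M` with `d` and Lie derivative `L`; `Fsig` forms on
`Σ` with `dsig`; `P t = σ_t^*` commutes with `d` and satisfies the transport equation
`d/dt ∫_Σ σ_t^*β = ∫_Σ σ_t^*(L_v β)`; `I` integrates over `Σ` and kills exact forms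
(Stokes, `∂Σ = ∅`).  If `α ∈ Ω^d(M)` is locally conserved (`d(L v α) = 0`), then
`∫_Σ σ_t^*α − ∫_Σ σ₀^*α = t · ∫_Σ σ₀^*(L_v α)`: linear in `t`, and depending only on the
(homotopy class of the) initial map `σ₀`. -/
theorem integral_difference_linear_in_time
    {F Fsig V : Type*} [AddCommGroup F] [Module ℝ F] [AddCommGroup Fsig] [Module ℝ Fsig]
    (d : F →ₗ[ℝ] F) (ic : V → F →ₗ[ℝ] F) (L : V → F →ₗ[ℝ] F)
    (hCartan : ∀ (X : V) (β : F), L X β = d (ic X β) + ic X (d β))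
    (v : V)
    (dsig : Fsig →ₗ[ℝ] Fsig)
    (P : ℝ → F →ₗ[ℝ] Fsig)                      -- pullback by σ_t = φ_t ∘ σ₀
    (I : Fsig →ₗ[ℝ] ℝ)                           -- integration over Σ
    (hPd : ∀ (t : ℝ) (β : F), P t (d β) = dsig (P t β))
    (hStokes : ∀ β : Fsig, I (dsig β) = 0)          -- Stokes, Σ closed
    (hder : ∀ (β : F) (t : ℝ),
      HasDerivAt (fun s : ℝ => I (P s β)) (I (P t (L v β))) t)
    (α : F) (hα : d (L v α) = 0) :
    ∀ t : ℝ, I (P t α) - I (P 0 α) = t * I (P 0 (L v α)) := by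
  have hflux_const : ∀ s, I (P s (L v α)) = I (P 0 (L v α)) := fun s => by
    have hflux_deriv : ∀ r, HasDerivAt (fun s => I (P s (L v α))) 0 r := fun r => by
      simpa only [integral_map_lie_eq_zero_of_closed (hCartan v) (hPd r) hStokes hα]
        using hder (L v α) r
    simpa [sub_eq_zero] using sub_eq_mul_of_hasDerivAt_const hflux_deriv s
  exact sub_eq_mul_of_hasDerivAt_const fun r => hflux_const r ▸ hder α r
end
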